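/- In the setting of the previous construction with λ₀ ∉ {1,-1,i,-i} and λ₀³ ∉ {1,-1}: the point spectrum of (Φⁿ) equals {1, -1, λ₀, λ̄₀, -λ₀, -λ̄₀}, and this set is not a group under multiplication. -/

import Mathlib

/-!
For `μ ≠ 0`, the equation `Φ x = μ • x` forces the two diagonal entries of `x` to agree and makes
`x 0 0`, `x 0 1`, `x 1 0` eigenvectors (or zero) of `Ψ` for `μ`, `λ̄₀ μ`, `λ₀ μ`. Hence the
peripheral point spectrum of `Φ` is `S ∪ λ₀ S ∪ λ̄₀ S`, where `S = {1, -1}` is that of `Ψ`.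
The resulting six-element set does not contain `λ₀²`: each of the six possible equalities
contradicts one of the assumptions on `λ₀`.
-/

open Module End ComplexConjugate
open scoped Pointwise

theorem Module.End.hasEigenvalue_iff_exists_ne_zero {R M : Type*} [CommRing R] [AddCommGroup M]
    [Module R M] {f : End R M} {μ : R} :
    f.HasEigenvalue μ ↔ ∃ x, x ≠ 0 ∧ f x = μ • x :=
  ⟨fun h ↦ h.exists_hasEigenvector.imp fun _ hx ↦ ⟨hx.2, hx.apply_eq_smul⟩,
    fun ⟨_, hx0, hx⟩ ↦ hasEigenvalue_of_hasEigenvector ⟨mem_eigenspace_iff.2 hx, hx0⟩⟩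

section

variable {E : Type*} [AddCommGroup E] [Module ℂ E]

def peripheralPointSpectrum (f : End ℂ E) : Set ℂ :=
  {μ | ‖μ‖ = 1 ∧ f.HasEigenvalue μ}

theorem setOf_exists_eigenvector_eq_peripheralPointSpectrum (f : End ℂ E) :
    {μ : ℂ | ‖μ‖ = 1 ∧ ∃ x, x ≠ 0 ∧ f x = μ • x} = peripheralPointSpectrum f := by
  simp only [peripheralPointSpectrum, hasEigenvalue_iff_exists_ne_zero]

variable (Ψ : End ℂ E) (p q : ℂ)

noncomputable def matrixPhi : End ℂ (Matrix (Fin 2) (Fin 2) E) where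
  toFun x := !![Ψ ((2⁻¹ : ℂ) • (x 0 0 + x 1 1)), p • Ψ (x 0 1);
    q • Ψ (x 1 0), Ψ ((2⁻¹ : ℂ) • (x 0 0 + x 1 1))]
  map_add' x y := by
    ext i j; fin_cases i <;> fin_cases j <;> simp [add_add_add_comm]
  map_smul' c x := by
    ext i j; fin_cases i <;> fin_cases j <;> simp [smul_comm c]

variable {Ψ p q}

theorem matrixPhi_apply (x : Matrix (Fin 2) (Fin 2) E) :
    matrixPhi Ψ p q x = !![Ψ ((2⁻¹ : ℂ) • (x 0 0 + x 1 1)), p • Ψ (x 0 1);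
      q • Ψ (x 1 0), Ψ ((2⁻¹ : ℂ) • (x 0 0 + x 1 1))] :=
  rfl

theorem matrixPhi_eq_smul_iff {μ : ℂ} (hμ : μ ≠ 0) (x : Matrix (Fin 2) (Fin 2) E) :
    matrixPhi Ψ p q x = μ • x ↔ x 1 1 = x 0 0 ∧ Ψ (x 0 0) = μ • x 0 0 ∧
      p • Ψ (x 0 1) = μ • x 0 1 ∧ q • Ψ (x 1 0) = μ • x 1 0 := by
  have half_smul_add_self (a : E) : (2⁻¹ : ℂ) • (a + a) = a := by
    rw [← two_smul ℂ a, smul_smul, inv_mul_cancel₀ two_ne_zero, one_smul]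
  rw [← Matrix.ext_iff, Fin.forall_fin_two, Fin.forall_fin_two, Fin.forall_fin_two]
  simp only [matrixPhi_apply, Matrix.of_apply, Matrix.cons_val', Matrix.cons_val_zero,
    Matrix.cons_val_one, Matrix.cons_val_fin_one, Matrix.smul_apply]
  constructor
  · rintro ⟨⟨h00, h01⟩, h10, h11⟩
    have hda : x 1 1 = x 0 0 := smul_right_injective E hμ (h11.symm.trans h00)
    rw [hda, half_smul_add_self] at h00
    exact ⟨hda, h00, h01, h10⟩
  · rintro ⟨hda, h00, h01, h10⟩
    rw [hda, half_smul_add_self]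
    exact ⟨⟨h00, h01⟩, h10, h00⟩

theorem hasEigenvalue_matrixPhi_iff {μ : ℂ} (hμ : μ ≠ 0) (hp : p ≠ 0) (hq : q ≠ 0) :
    (matrixPhi Ψ p q).HasEigenvalue μ ↔
      Ψ.HasEigenvalue μ ∨ Ψ.HasEigenvalue (p⁻¹ * μ) ∨ Ψ.HasEigenvalue (q⁻¹ * μ) := by
  have smul_apply_eq_iff {c : ℂ} (hc : c ≠ 0) (a : E) :
      c • Ψ a = μ • a ↔ Ψ a = (c⁻¹ * μ) • a := by
    rw [mul_smul, eq_inv_smul_iff₀ hc]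
  simp only [hasEigenvalue_iff_exists_ne_zero, matrixPhi_eq_smul_iff hμ,
    ← smul_apply_eq_iff hp, ← smul_apply_eq_iff hq]
  constructor
  · rintro ⟨x, hx0, hda, h00, h01, h10⟩
    by_cases ha : x 0 0 = 0
    · by_cases hb : x 0 1 = 0
      · refine Or.inr (Or.inr ⟨x 1 0, fun hc ↦ hx0 ?_, h10⟩)
        ext i j
        fin_cases i <;> fin_cases j <;> simp [ha, hb, hc, hda]
      · exact Or.inr (Or.inl ⟨x 0 1, hb, h01⟩)
    · exact Or.inl ⟨x 0 0, ha, h00⟩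
  · rintro (⟨a, ha, h⟩ | ⟨a, ha, h⟩ | ⟨a, ha, h⟩)
    · exact ⟨!![a, 0; 0, a], fun h0 ↦ ha (congrFun₂ h0 0 0), by simpa using h⟩
    · exact ⟨!![0, a; 0, 0], fun h0 ↦ ha (congrFun₂ h0 0 1), by simpa using h⟩
    · exact ⟨!![0, 0; a, 0], fun h0 ↦ ha (congrFun₂ h0 1 0), by simpa using h⟩

variable (Ψ) in
theorem peripheralPointSpectrum_matrixPhi (hp : ‖p‖ = 1) (hq : ‖q‖ = 1) :
    peripheralPointSpectrum (matrixPhi Ψ p q) =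
      peripheralPointSpectrum Ψ ∪ p • peripheralPointSpectrum Ψ ∪
        q • peripheralPointSpectrum Ψ := by
  have hp0 : p ≠ 0 := norm_ne_zero_iff.1 (hp ▸ one_ne_zero)
  have hq0 : q ≠ 0 := norm_ne_zero_iff.1 (hq ▸ one_ne_zero)
  ext μ
  simp only [peripheralPointSpectrum, Set.mem_union, Set.mem_smul_set_iff_inv_smul_mem₀ hp0,
    Set.mem_smul_set_iff_inv_smul_mem₀ hq0, Set.mem_ofPred_eq, smul_eq_mul, norm_mul, norm_inv,
    hp, hq, inv_one, one_mul]
  by_cases hμ : ‖μ‖ = 1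
  · have hμ0 : μ ≠ 0 := norm_ne_zero_iff.1 (hμ ▸ one_ne_zero)
    simp only [hμ, true_and, hasEigenvalue_matrixPhi_iff hμ0 hp0 hq0, or_assoc]
  · simp only [hμ, false_and, or_self]

end

theorem mul_self_notMem_of_ne {l : ℂ} (hl : ‖l‖ = 1)
    (h1 : l ≠ 1) (h2 : l ≠ -1) (h3 : l ≠ Complex.I) (h4 : l ≠ -Complex.I)
    (h5 : l ^ 3 ≠ 1) (h6 : l ^ 3 ≠ -1) :
    l * l ∉ ({1, -1, l, conj l, -l, -conj l} : Set ℂ) := by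
  have hl0 : l ≠ 0 := norm_ne_zero_iff.1 (hl ▸ one_ne_zero)
  have hlc : l * conj l = 1 := by rw [← Complex.inv_eq_conj hl, mul_inv_cancel₀ hl0]
  simp only [Set.mem_insert_iff, Set.mem_singleton_iff, not_or]
  refine ⟨fun h ↦ ?_, fun h ↦ ?_, fun h ↦ h1 ?_, fun h ↦ h5 ?_, fun h ↦ h2 ?_, fun h ↦ h6 ?_⟩
  · rcases mul_self_eq_one_iff.1 h with h | h <;> contradiction
  · have : (l - Complex.I) * (l + Complex.I) = 0 := by linear_combination h - Complex.I_sq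
    rcases mul_eq_zero.1 this with h | h
    · exact h3 (sub_eq_zero.1 h)
    · exact h4 (eq_neg_of_add_eq_zero_left h)
  · exact mul_left_cancel₀ hl0 (h.trans (mul_one l).symm)
  · linear_combination l * h + hlc
  · exact mul_left_cancel₀ hl0 (h.trans (mul_neg_one l).symm)
  · linear_combination l * h - hlc

theorem matrix_phi_spectrum_not_group_general
    {M : Type*} [NormedCommRing M] [NormedAlgebra ℂ M]
    (Ψ : M →ₗ[ℂ] M)
    (hspec : {μ : ℂ | ‖μ‖ = 1 ∧ ∃ a : M, a ≠ 0 ∧ Ψ a = μ • a} = {1, -1})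
    (l : ℂ) (hl : ‖l‖ = 1)
    (h1 : l ≠ 1) (h2 : l ≠ -1) (h3 : l ≠ Complex.I) (h4 : l ≠ -Complex.I)
    (h5 : l ^ 3 ≠ 1) (h6 : l ^ 3 ≠ -1) :
    {lam : ℂ | ‖lam‖ = 1 ∧ ∃ x : Matrix (Fin 2) (Fin 2) M, x ≠ 0 ∧
        !![Ψ ((2⁻¹ : ℂ) • (x 0 0 + x 1 1)), l • Ψ (x 0 1);
           (starRingEnd ℂ) l • Ψ (x 1 0), Ψ ((2⁻¹ : ℂ) • (x 0 0 + x 1 1))] = lam • x} =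
      {1, -1, l, starRingEnd ℂ l, -l, -(starRingEnd ℂ l)} ∧
    ¬ (∀ a ∈ ({1, -1, l, starRingEnd ℂ l, -l, -(starRingEnd ℂ l)} : Set ℂ),
       ∀ b ∈ ({1, -1, l, starRingEnd ℂ l, -l, -(starRingEnd ℂ l)} : Set ℂ),
         a * b ∈ ({1, -1, l, starRingEnd ℂ l, -l, -(starRingEnd ℂ l)} : Set ℂ)) := by
  rw [setOf_exists_eigenvector_eq_peripheralPointSpectrum] at hspec
  refine ⟨(setOf_exists_eigenvector_eq_peripheralPointSpectrum (matrixPhi Ψ l (conj l))).trans ?_,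
    fun h ↦ mul_self_notMem_of_ne hl h1 h2 h3 h4 h5 h6 (h l (by simp) l (by simp))⟩
  rw [peripheralPointSpectrum_matrixPhi Ψ hl (by rwa [Complex.norm_conj]), hspec]
  simp only [Set.smul_set_insert, Set.smul_set_singleton, smul_eq_mul, mul_one, mul_neg]
  ext μ
  simp only [Set.mem_union, Set.mem_insert_iff, Set.mem_singleton_iff]
  tauto

/-- With M abelian, Ψ positive normal unital ergodic with point spectrum
{1,-1} and M_{-1}(Ψ) = ℂu (u unitary), |λ₀| = 1, λ₀ ∉ {1,-1,i,-i}, λ₀³ ∉ {1,-1}: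
the point spectrum of Φ([[a,b],[c,d]]) = [[Ψ((a+d)/2), λ₀Ψ(b)],[λ̄₀Ψ(c), Ψ((a+d)/2)]]
equals {1, -1, λ₀, λ̄₀, -λ₀, -λ̄₀}, and this set is not a group (not closed under
multiplication). -/
theorem matrix_phi_spectrum_not_group
    {M : Type*} [NormedCommRing M] [StarRing M] [CStarRing M] [NormedAlgebra ℂ M]
    [StarModule ℂ M] [CompleteSpace M] [PartialOrder M] [StarOrderedRing M]
    (Ψ : M →ₗ[ℂ] M) (hΨunital : Ψ 1 = 1) (hΨpos : ∀ a : M, 0 ≤ a → 0 ≤ Ψ a)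
    (hΨerg : ∀ a : M, Ψ a = a → ∃ θ : ℂ, a = θ • (1 : M))
    (hspec : {μ : ℂ | ‖μ‖ = 1 ∧ ∃ a : M, a ≠ 0 ∧ Ψ a = μ • a} = {1, -1})
    (u : M) (huni : star u * u = 1 ∧ u * star u = 1) (hu : Ψ u = -u)
    (hM1 : ∀ a : M, Ψ a = -a → ∃ α : ℂ, a = α • u)
    (l : ℂ) (hl : ‖l‖ = 1)
    (h1 : l ≠ 1) (h2 : l ≠ -1) (h3 : l ≠ Complex.I) (h4 : l ≠ -Complex.I)
    (h5 : l ^ 3 ≠ 1) (h6 : l ^ 3 ≠ -1) :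
    {lam : ℂ | ‖lam‖ = 1 ∧ ∃ x : Matrix (Fin 2) (Fin 2) M, x ≠ 0 ∧
        !![Ψ ((2⁻¹ : ℂ) • (x 0 0 + x 1 1)), l • Ψ (x 0 1);
           (starRingEnd ℂ) l • Ψ (x 1 0), Ψ ((2⁻¹ : ℂ) • (x 0 0 + x 1 1))] = lam • x} =
      {1, -1, l, starRingEnd ℂ l, -l, -(starRingEnd ℂ l)} ∧
    ¬ (∀ a ∈ ({1, -1, l, starRingEnd ℂ l, -l, -(starRingEnd ℂ l)} : Set ℂ),
       ∀ b ∈ ({1, -1, l, starRingEnd ℂ l, -l, -(starRingEnd ℂ l)} : Set ℂ),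
         a * b ∈ ({1, -1, l, starRingEnd ℂ l, -l, -(starRingEnd ℂ l)} : Set ℂ)) :=
  matrix_phi_spectrum_not_group_general Ψ hspec l hl h1 h2 h3 h4 h5 h6
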